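/- Let M = [[A, 0],[0, B]] be a positive semidefinite block-diagonal matrix with 2×2 blocks A and B, and p > 2 with conjugate index q (1/p + 1/q = 1). If N = [[K, 0],[0, L]] is positive semidefinite block-diagonal with Tr(MN) = ||M||_p ||N||_q, then ||M||_p ||N||_q ≤ Tr(M_r N_r) ≤ ||M_r||_p ||N_r||_q, where X_r denotes the entrywise rearrangement pairing entrywise maxima with maxima and minima with minima across the two blocks. -/

import Mathlib

open scoped Matrix

/-- The Schatten `p`-norm `(Tr (M* M)^{p/2})^{1/p}` of a real matrix. -/
noncomputable def schattenNorm {n : Type*} [Fintype n] [DecidableEq n]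
    (p : ℝ) (M : Matrix n n ℝ) : ℝ :=
  (∑ i, (Matrix.isHermitian_conjTranspose_mul_self M).eigenvalues i ^ (p / 2)) ^ (1 / p)

/-!
The first inequality is entrywise: `Tr(MN) = ∑ᵢⱼ (Aᵢⱼ Kⱼᵢ + Bᵢⱼ Lⱼᵢ)`, and each such pair of
products only grows when the absolute values are rearranged so that the larger ones are paired
(two-term rearrangement inequality).

The second is Hölder's inequality for Schatten norms, which for block-diagonal real symmetric
matrices with `2 × 2` blocks is elementary. The eigenvalues `λ₊ ≥ λ₋` of a symmetric `2 × 2`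
matrix are explicit, and Cauchy–Schwarz gives the von Neumann trace inequality
`Tr(XY) ≤ λ₊(X) λ₊(Y) + λ₋(X) λ₋(Y)`. Since the Schatten `p`-norm of a symmetric matrix is the
`ℓᵖ`-norm of its eigenvalues, the scalar Hölder inequality over the four eigenvalues of each
block-diagonal matrix concludes.
-/

open Polynomial

theorem mul_add_mul_le_max_mul_max_add_min_mul_min (u v w z : ℝ) :
    u * w + v * z ≤ max u v * max w z + min u v * min w z := by
  rcases le_total u v with h | h <;> rcases le_total w z with h' | h' <;>
    simp only [max_eq_left, max_eq_right, min_eq_left, min_eq_right, h, h'] <;> nlinarith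

namespace Matrix

theorem IsHermitian.of_entrywise {n : Type*} {A B : Matrix n n ℝ} (hA : A.IsHermitian)
    (hB : B.IsHermitian) (f : ℝ → ℝ → ℝ) : (of fun i j => f (A i j) (B i j)).IsHermitian := by
  ext i j
  simpa using congrArg₂ f (hA.apply i j) (hB.apply i j)

section Spectrum

variable {n ι : Type*} [Fintype n] [DecidableEq n] [Fintype ι]

theorem IsHermitian.sum_comp_eigenvalues_of_charpoly_eq {A : Matrix n n ℝ} (hA : A.IsHermitian)
    {μ : ι → ℝ} (hμ : A.charpoly = ∏ i, (X - C (μ i))) (f : ℝ → ℝ) :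
    ∑ i, f (hA.eigenvalues i) = ∑ i, f (μ i) := by
  have h : Finset.univ.val.map hA.eigenvalues = Finset.univ.val.map μ := by
    have hroots : (∏ i, (X - C (μ i))).roots = Finset.univ.val.map μ := by
      rw [Finset.prod_eq_multiset_prod, ← roots_multiset_prod_X_sub_C (Finset.univ.val.map μ),
        Multiset.map_map]
      rfl
    simpa [← hμ, hA.roots_charpoly_eq_eigenvalues] using hroots
  simpa [Multiset.map_map] using congrArg (fun s => (s.map f).sum) h

theorem IsHermitian.charpoly_conjTranspose_mul_self {A : Matrix n n ℝ} (hA : A.IsHermitian) :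
    (Aᴴ * A).charpoly = ∏ i, (X - C (hA.eigenvalues i ^ 2)) := by
  have hA' : IsSelfAdjoint A := hA
  rw [hA.eq, ← sq, ← cfc_pow_id (R := ℝ) A 2, hA.charpoly_cfc_eq]
  simp

theorem IsHermitian.schattenNorm_eq_of_charpoly_eq {A : Matrix n n ℝ} (hA : A.IsHermitian)
    {μ : ι → ℝ} (hμ : A.charpoly = ∏ i, (X - C (μ i))) (p : ℝ) :
    schattenNorm p A = (∑ i, |μ i| ^ p) ^ (1 / p) := by
  have hsq (x : ℝ) : (x ^ 2) ^ (p / 2) = |x| ^ p := by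
    rw [← sq_abs, ← Real.rpow_natCast, ← Real.rpow_mul (abs_nonneg x)]
    ring_nf
  rw [schattenNorm, (isHermitian_conjTranspose_mul_self A).sum_comp_eigenvalues_of_charpoly_eq
    hA.charpoly_conjTranspose_mul_self (· ^ (p / 2)),
    hA.sum_comp_eigenvalues_of_charpoly_eq hμ (fun x => (x ^ 2) ^ (p / 2))]
  simp only [hsq]

end Spectrum

section FinTwo

-- `√` of the discriminant `(a - d)² + 4bc` of the characteristic polynomial, taking `c = b`.
noncomputable def eigenvalueGapFinTwo (H : Matrix (Fin 2) (Fin 2) ℝ) : ℝ :=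
  √((H 0 0 - H 1 1) ^ 2 + 4 * H 0 1 ^ 2)

noncomputable def eigenvaluesFinTwo (H : Matrix (Fin 2) (Fin 2) ℝ) : Fin 2 → ℝ :=
  ![(H.trace + eigenvalueGapFinTwo H) / 2, (H.trace - eigenvalueGapFinTwo H) / 2]

theorem eigenvalueGapFinTwo_sq (H : Matrix (Fin 2) (Fin 2) ℝ) :
    eigenvalueGapFinTwo H ^ 2 = (H 0 0 - H 1 1) ^ 2 + 4 * H 0 1 ^ 2 :=
  Real.sq_sqrt (by positivity)

theorem IsHermitian.charpoly_eq_prod_eigenvaluesFinTwo {H : Matrix (Fin 2) (Fin 2) ℝ}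
    (hH : H.IsHermitian) : H.charpoly = ∏ i, (X - C (eigenvaluesFinTwo H i)) := by
  have hsymm : H 1 0 = H 0 1 := by simpa using hH.apply 0 1
  have hdet : H.det = eigenvaluesFinTwo H 0 * eigenvaluesFinTwo H 1 := by
    simp only [eigenvaluesFinTwo, det_fin_two, trace_fin_two, hsymm, cons_val_zero, cons_val_one]
    linear_combination (1 / 4) * eigenvalueGapFinTwo_sq H
  have htrace : H.trace = eigenvaluesFinTwo H 0 + eigenvaluesFinTwo H 1 := by
    simp only [eigenvaluesFinTwo, cons_val_zero, cons_val_one]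
    ring
  rw [charpoly_fin_two, Fin.prod_univ_two, htrace, hdet, C_add, C_mul]
  ring

theorem IsHermitian.trace_mul_le_sum_eigenvaluesFinTwo {H K : Matrix (Fin 2) (Fin 2) ℝ}
    (hH : H.IsHermitian) (hK : K.IsHermitian) :
    (H * K).trace ≤ ∑ i, eigenvaluesFinTwo H i * eigenvaluesFinTwo K i := by
  have hH' : H 1 0 = H 0 1 := by simpa using hH.apply 0 1
  have hK' : K 1 0 = K 0 1 := by simpa using hK.apply 0 1
  have hCS := Real.sum_mul_le_sqrt_mul_sqrt Finset.univ ![H 0 0 - H 1 1, 2 * H 0 1]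
    ![K 0 0 - K 1 1, 2 * K 0 1]
  simp only [Fin.sum_univ_two, cons_val_zero, cons_val_one] at hCS
  simp only [eigenvaluesFinTwo, eigenvalueGapFinTwo, Fin.sum_univ_two, cons_val_zero,
    cons_val_one, trace_fin_two, mul_apply, hH', hK']
  ring_nf at hCS ⊢
  linarith

end FinTwo

section Blocks

theorem trace_fromBlocks_zero_mul_fromBlocks_zero {m n : Type*} [Fintype m] [Fintype n]
    (A K : Matrix m m ℝ) (B L : Matrix n n ℝ) :
    (fromBlocks A 0 0 B * fromBlocks K 0 0 L).trace = (A * K).trace + (B * L).trace := by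
  simp [fromBlocks_multiply, trace, Fintype.sum_sum_type]

theorem charpoly_fromBlocks_eq_prod_eigenvaluesFinTwo
    {X Y : Matrix (Fin 2) (Fin 2) ℝ} (hX : X.IsHermitian) (hY : Y.IsHermitian) :
    (fromBlocks X 0 0 Y).charpoly =
      ∏ i, (Polynomial.X - C (Sum.elim (eigenvaluesFinTwo X) (eigenvaluesFinTwo Y) i)) := by
  rw [charpoly_fromBlocks_zero₁₂, Fintype.prod_sum_type, hX.charpoly_eq_prod_eigenvaluesFinTwo,
    hY.charpoly_eq_prod_eigenvaluesFinTwo]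
  rfl

theorem trace_fromBlocks_mul_le_schattenNorm_mul {p q : ℝ} (hpq : p.HolderConjugate q)
    {X Y Z W : Matrix (Fin 2) (Fin 2) ℝ} (hX : X.IsHermitian) (hY : Y.IsHermitian)
    (hZ : Z.IsHermitian) (hW : W.IsHermitian) :
    (fromBlocks X 0 0 Y * fromBlocks Z 0 0 W).trace ≤
      schattenNorm p (fromBlocks X 0 0 Y) * schattenNorm q (fromBlocks Z 0 0 W) := by
  rw [(hX.fromBlocks (by simp) hY).schattenNorm_eq_of_charpoly_eq
      (charpoly_fromBlocks_eq_prod_eigenvaluesFinTwo hX hY) p,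
    (hZ.fromBlocks (by simp) hW).schattenNorm_eq_of_charpoly_eq
      (charpoly_fromBlocks_eq_prod_eigenvaluesFinTwo hZ hW) q]
  calc (fromBlocks X 0 0 Y * fromBlocks Z 0 0 W).trace = (X * Z).trace + (Y * W).trace :=
        trace_fromBlocks_zero_mul_fromBlocks_zero X Z Y W
    _ ≤ ∑ i, eigenvaluesFinTwo X i * eigenvaluesFinTwo Z i +
          ∑ i, eigenvaluesFinTwo Y i * eigenvaluesFinTwo W i :=
        add_le_add (hX.trace_mul_le_sum_eigenvaluesFinTwo hZ)
          (hY.trace_mul_le_sum_eigenvaluesFinTwo hW)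
    _ = ∑ i, Sum.elim (eigenvaluesFinTwo X) (eigenvaluesFinTwo Y) i *
          Sum.elim (eigenvaluesFinTwo Z) (eigenvaluesFinTwo W) i := by
        rw [Fintype.sum_sum_type]; rfl
    _ ≤ _ := Real.inner_le_Lp_mul_Lq _ _ _ hpq

end Blocks

theorem trace_mul_add_trace_mul_le_rearranged {n : Type*} [Fintype n] (A B K L : Matrix n n ℝ) :
    (A * K).trace + (B * L).trace ≤
      (of (fun i j => max |A i j| |B i j|) * of (fun i j => max |K i j| |L i j|)).trace +
        (of (fun i j => min |A i j| |B i j|) * of (fun i j => min |K i j| |L i j|)).trace := by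
  simp only [trace, diag, mul_apply, of_apply, ← Finset.sum_add_distrib]
  refine Finset.sum_le_sum fun i _ => Finset.sum_le_sum fun j _ => ?_
  calc A i j * K j i + B i j * L j i ≤ |A i j| * |K j i| + |B i j| * |L j i| := by
        rw [← abs_mul, ← abs_mul]; exact add_le_add (le_abs_self _) (le_abs_self _)
    _ ≤ _ := mul_add_mul_le_max_mul_max_add_min_mul_min _ _ _ _

end Matrix

open Matrix

theorem duality_rearrangement (p q : ℝ) (hp : 2 < p) (hpq : 1 / p + 1 / q = 1)
    (A B K L : Matrix (Fin 2) (Fin 2) ℝ)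
    (hM : (Matrix.fromBlocks A 0 0 B).PosSemidef)
    (hN : (Matrix.fromBlocks K 0 0 L).PosSemidef)
    (hdual : (Matrix.fromBlocks A 0 0 B * Matrix.fromBlocks K 0 0 L).trace =
      schattenNorm p (Matrix.fromBlocks A 0 0 B) *
        schattenNorm q (Matrix.fromBlocks K 0 0 L)) :
    schattenNorm p (Matrix.fromBlocks A 0 0 B) *
        schattenNorm q (Matrix.fromBlocks K 0 0 L) ≤
      (Matrix.fromBlocks (Matrix.of fun i j => max |A i j| |B i j|) 0 0
          (Matrix.of fun i j => min |A i j| |B i j|) *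
        Matrix.fromBlocks (Matrix.of fun i j => max |K i j| |L i j|) 0 0
          (Matrix.of fun i j => min |K i j| |L i j|)).trace ∧
    (Matrix.fromBlocks (Matrix.of fun i j => max |A i j| |B i j|) 0 0
          (Matrix.of fun i j => min |A i j| |B i j|) *
        Matrix.fromBlocks (Matrix.of fun i j => max |K i j| |L i j|) 0 0
          (Matrix.of fun i j => min |K i j| |L i j|)).trace ≤
      schattenNorm p (Matrix.fromBlocks (Matrix.of fun i j => max |A i j| |B i j|) 0 0
          (Matrix.of fun i j => min |A i j| |B i j|)) *
        schattenNorm q (Matrix.fromBlocks (Matrix.of fun i j => max |K i j| |L i j|) 0 0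
          (Matrix.of fun i j => min |K i j| |L i j|)) := by
  obtain ⟨hA, -, -, hB⟩ := isHermitian_fromBlocks_iff.mp hM.isHermitian
  obtain ⟨hK, -, -, hL⟩ := isHermitian_fromBlocks_iff.mp hN.isHermitian
  have hpq' : p.HolderConjugate q :=
    Real.holderConjugate_iff.mpr ⟨by linarith, by simpa only [one_div] using hpq⟩
  refine ⟨?_, trace_fromBlocks_mul_le_schattenNorm_mul hpq'
    (hA.of_entrywise hB fun a b => max |a| |b|) (hA.of_entrywise hB fun a b => min |a| |b|)
    (hK.of_entrywise hL fun a b => max |a| |b|) (hK.of_entrywise hL fun a b => min |a| |b|)⟩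
  rw [← hdual, trace_fromBlocks_zero_mul_fromBlocks_zero, trace_fromBlocks_zero_mul_fromBlocks_zero]
  exact trace_mul_add_trace_mul_le_rearranged A B K L
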